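/- Let (𝒞,𝒳,𝒟) be a localization triple in an additive category 𝒜 and let 𝒮 be the class of morphisms s of 𝒜 such that R(Q(s̄)) is an isomorphism in (𝒞∩𝒟)/𝒳. Let γ: 𝒜 → 𝒜[𝒮⁻¹] be a localization of 𝒜 with respect to 𝒮. Then every morphism φ: A → B in 𝒜[𝒮⁻¹] can be written as φ = γ(r_B) ∘ γ(j^{Q(B)})⁻¹ ∘ γ(f′) ∘ γ(j^{Q(A)}) ∘ γ(r_A)⁻¹ for some morphism f′: R(Q(A)) → R(Q(B)) of 𝒜 between objects of 𝒞 ∩ 𝒟. -/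

import Mathlib

set_option linter.unusedSectionVars false


open CategoryTheory CategoryTheory.Limits

universe w' w v u

namespace LiHomotopy

variable {𝒜 : Type u} [Category.{v} 𝒜] [Preadditive 𝒜] [HasZeroObject 𝒜]
  [HasBinaryBiproducts 𝒜]

/-- `f` factors through an object belonging to `X`. -/
def FactorsThruSet (X : Set 𝒜) {A B : 𝒜} (f : A ⟶ B) : Prop :=
  ∃ (M : 𝒜) (_ : M ∈ X) (u : A ⟶ M) (v : M ⟶ B), f = u ≫ v

/-- A localization triple `(C, X, D)` in an additive category `𝒜`, consisting of
full additive subcategories `X ⊆ C ∩ D` together with the chosen approximation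
sequences of Definition 3.2. -/
structure LocalizationTriple (C X D : Set 𝒜) where
  X_sub_C : X ⊆ C
  X_sub_D : X ⊆ D
  C_zero : ∀ Z : 𝒜, IsZero Z → Z ∈ C
  C_sum : ∀ {M N : 𝒜}, M ∈ C → N ∈ C → (M ⊞ N) ∈ C
  X_zero : ∀ Z : 𝒜, IsZero Z → Z ∈ X
  X_sum : ∀ {M N : 𝒜}, M ∈ X → N ∈ X → (M ⊞ N) ∈ X
  D_zero : ∀ Z : 𝒜, IsZero Z → Z ∈ D
  D_sum : ∀ {M N : 𝒜}, M ∈ D → N ∈ D → (M ⊞ N) ∈ D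
  /-- the chosen `C`-precover `Q(A) → A` -/
  Qobj : 𝒜 → 𝒜
  Wl : 𝒜 → 𝒜
  r : ∀ A : 𝒜, Qobj A ⟶ A
  ω : ∀ A : 𝒜, Wl A ⟶ Qobj A
  Qobj_mem : ∀ A : 𝒜, Qobj A ∈ C
  r_precover : ∀ (A C' : 𝒜), C' ∈ C → ∀ g : C' ⟶ A, ∃ h : C' ⟶ Qobj A, h ≫ r A = g
  ω_r : ∀ A : 𝒜, ω A ≫ r A = 0
  ω_weakKernel : ∀ (A T : 𝒜) (g : T ⟶ Qobj A), g ≫ r A = 0 → ∃ h : T ⟶ Wl A, h ≫ ω A = g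
  Wl_perp : ∀ (A C' : 𝒜), C' ∈ C → ∀ g : C' ⟶ Wl A, FactorsThruSet X g
  /-- the chosen `D`-preenvelope `A → R(A)` -/
  Robj : 𝒜 → 𝒜
  Wr : 𝒜 → 𝒜
  j : ∀ A : 𝒜, A ⟶ Robj A
  τ : ∀ A : 𝒜, Robj A ⟶ Wr A
  Robj_mem : ∀ A : 𝒜, Robj A ∈ D
  j_preenvelope : ∀ (A D' : 𝒜), D' ∈ D → ∀ g : A ⟶ D', ∃ h : Robj A ⟶ D', j A ≫ h = g
  j_τ : ∀ A : 𝒜, j A ≫ τ A = 0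
  τ_weakCokernel : ∀ (A T : 𝒜) (g : Robj A ⟶ T), j A ≫ g = 0 → ∃ h : Wr A ⟶ T, τ A ≫ h = g
  Wr_perp : ∀ (A D' : 𝒜), D' ∈ D → ∀ g : Wr A ⟶ D', FactorsThruSet X g
  Qobj_mem_of_D : ∀ A : 𝒜, A ∈ D → Qobj A ∈ C ∩ D
  Robj_mem_of_C : ∀ A : 𝒜, A ∈ C → Robj A ∈ C ∩ D

/-- The class `𝒮` of morphisms `s` such that `R(Q(s̄))` is an isomorphism in the
stable category of `C ∩ D` modulo `X`, expressed via representatives. -/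
def SClass {C X D : Set 𝒜} (L : LocalizationTriple C X D) : MorphismProperty 𝒜 :=
  fun A B s =>
    ∃ (sc : L.Qobj A ⟶ L.Qobj B) (sf : L.Robj (L.Qobj A) ⟶ L.Robj (L.Qobj B)),
      sc ≫ L.r B = L.r A ≫ s ∧
      L.j (L.Qobj A) ≫ sf = sc ≫ L.j (L.Qobj B) ∧
      ∃ g : L.Robj (L.Qobj B) ⟶ L.Robj (L.Qobj A),
        FactorsThruSet X (sf ≫ g - 𝟙 _) ∧ FactorsThruSet X (g ≫ sf - 𝟙 _)

section Fact

variable {X : Set 𝒜}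

lemma FactorsThruSet.precomp {A' A B : 𝒜} (g : A' ⟶ A) {f : A ⟶ B}
    (h : FactorsThruSet X f) : FactorsThruSet X (g ≫ f) := by
  obtain ⟨M, hM, u, v, rfl⟩ := h
  exact ⟨M, hM, g ≫ u, v, by simp⟩

lemma FactorsThruSet.postcomp {A B B' : 𝒜} {f : A ⟶ B} (g : B ⟶ B')
    (h : FactorsThruSet X f) : FactorsThruSet X (f ≫ g) := by
  obtain ⟨M, hM, u, v, rfl⟩ := h
  exact ⟨M, hM, u, v ≫ g, by simp⟩

lemma FactorsThruSet.zero (hX : ∀ Z : 𝒜, IsZero Z → Z ∈ X) (A B : 𝒜) :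
    FactorsThruSet X (0 : A ⟶ B) := by
  obtain ⟨Z, hZ⟩ := HasZeroObject.zero (C := 𝒜)
  exact ⟨Z, hX Z hZ, 0, 0, by simp⟩

lemma FactorsThruSet.add (hX : ∀ {M N : 𝒜}, M ∈ X → N ∈ X → (M ⊞ N) ∈ X)
    {A B : 𝒜} {f g : A ⟶ B} (hf : FactorsThruSet X f) (hg : FactorsThruSet X g) :
    FactorsThruSet X (f + g) := by
  obtain ⟨M, hM, u, v, rfl⟩ := hf
  obtain ⟨N, hN, u', v', rfl⟩ := hg
  exact ⟨M ⊞ N, hX hM hN, biprod.lift u u', biprod.desc v v', by simp⟩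

lemma FactorsThruSet.neg {A B : 𝒜} {f : A ⟶ B} (h : FactorsThruSet X f) :
    FactorsThruSet X (-f) := by
  obtain ⟨M, hM, u, v, rfl⟩ := h
  exact ⟨M, hM, -u, v, by simp⟩

lemma FactorsThruSet.of_eq {A B : 𝒜} {f g : A ⟶ B} (h : FactorsThruSet X f)
    (e : f = g) : FactorsThruSet X g := e ▸ h

end Fact

namespace LocalizationTriple

variable {C X D : Set 𝒜} (L : LocalizationTriple C X D)

/-- T1: if `j P ≫ x` factors through `X` and the target is in `D`,
then `x` factors through `X`. -/
lemma factors_of_j_comp {P T : 𝒜} (hT : T ∈ D) (x : L.Robj P ⟶ T)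
    (h : FactorsThruSet X (L.j P ≫ x)) : FactorsThruSet X x := by
  obtain ⟨M, hM, u, v, huv⟩ := h
  obtain ⟨u', hu'⟩ := L.j_preenvelope P M (L.X_sub_D hM) u
  obtain ⟨k, hk⟩ := L.τ_weakCokernel P T (x - u' ≫ v) (by
    rw [Preadditive.comp_sub, ← Category.assoc, hu', ← huv, sub_self])
  have hx : x = u' ≫ v + L.τ P ≫ k := by rw [hk]; abel
  exact (FactorsThruSet.add L.X_sum ⟨M, hM, u', v, rfl⟩
    ((L.Wr_perp P T hT k).precomp (L.τ P))).of_eq hx.symm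

/-- T2: dual. -/
lemma factors_of_comp_r {P T : 𝒜} (hT : T ∈ C) (x : T ⟶ L.Qobj P)
    (h : FactorsThruSet X (x ≫ L.r P)) : FactorsThruSet X x := by
  obtain ⟨M, hM, u, v, huv⟩ := h
  obtain ⟨v', hv'⟩ := L.r_precover P M (L.X_sub_C hM) v
  obtain ⟨k, hk⟩ := L.ω_weakKernel P T (x - u ≫ v') (by
    rw [Preadditive.sub_comp, Category.assoc, hv', ← huv, sub_self])
  have hx : x = u ≫ v' + k ≫ L.ω P := by rw [hk]; abel
  exact (FactorsThruSet.add L.X_sum ⟨M, hM, u, v', rfl⟩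
    ((L.Wl_perp P T hT k).postcomp (L.ω P))).of_eq hx.symm

/-- a section of `r P` for `P ∈ C`, with stably-trivial other composite. -/
lemma r_section {P : 𝒜} (hP : P ∈ C) :
    ∃ p : P ⟶ L.Qobj P, p ≫ L.r P = 𝟙 P ∧ FactorsThruSet X (L.r P ≫ p - 𝟙 _) := by
  obtain ⟨p, hp⟩ := L.r_precover P P hP (𝟙 P)
  refine ⟨p, hp, L.factors_of_comp_r (L.Qobj_mem P) _ ?_⟩
  have : (L.r P ≫ p - 𝟙 _) ≫ L.r P = 0 := by
    rw [Preadditive.sub_comp, Category.assoc, hp, Category.comp_id, Category.id_comp, sub_self]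
  exact (FactorsThruSet.zero L.X_zero _ _).of_eq this.symm

end LocalizationTriple


namespace LocalizationTriple

variable {C X D : Set 𝒜} (L : LocalizationTriple C X D)

lemma r_mem_S (A : 𝒜) : SClass L (L.r A) := by
  obtain ⟨sf, hsf⟩ := L.j_preenvelope (L.Qobj (L.Qobj A)) (L.Robj (L.Qobj A))
    (L.Robj_mem (L.Qobj A)) (L.r (L.Qobj A) ≫ L.j (L.Qobj A))
  obtain ⟨p, hp, hpr⟩ := L.r_section (L.Qobj_mem A)
  obtain ⟨g, hg⟩ := L.j_preenvelope (L.Qobj A) (L.Robj (L.Qobj (L.Qobj A)))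
    (L.Robj_mem _) (p ≫ L.j (L.Qobj (L.Qobj A)))
  refine ⟨L.r (L.Qobj A), sf, rfl, hsf, g, ?_, ?_⟩
  · apply L.factors_of_j_comp (L.Robj_mem _)
    have key : L.j (L.Qobj (L.Qobj A)) ≫ sf ≫ g =
        (L.r (L.Qobj A) ≫ p) ≫ L.j (L.Qobj (L.Qobj A)) := by
      rw [← Category.assoc, hsf, Category.assoc, hg, ← Category.assoc, Category.assoc]
    have h1 : L.j (L.Qobj (L.Qobj A)) ≫ (sf ≫ g - 𝟙 _) =
        (L.r (L.Qobj A) ≫ p - 𝟙 _) ≫ L.j (L.Qobj (L.Qobj A)) := by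
      simp only [Preadditive.comp_sub, Preadditive.sub_comp, Category.comp_id,
        Category.id_comp, key]
    exact (hpr.postcomp (L.j (L.Qobj (L.Qobj A)))).of_eq h1.symm
  · apply L.factors_of_j_comp (L.Robj_mem _)
    have key : L.j (L.Qobj A) ≫ g ≫ sf = L.j (L.Qobj A) ≫ 𝟙 _ := by
      rw [← Category.assoc, hg, Category.assoc, hsf, ← Category.assoc, hp,
        Category.id_comp, Category.comp_id]
    have h1 : L.j (L.Qobj A) ≫ (g ≫ sf - 𝟙 _) = 0 := by
      rw [Preadditive.comp_sub, key, sub_self]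
    exact (FactorsThruSet.zero L.X_zero _ _).of_eq h1.symm

lemma j_mem_S {N : 𝒜} (hN : N ∈ C) : SClass L (L.j N) := by
  have hRN : L.Robj N ∈ C ∩ D := L.Robj_mem_of_C N hN
  obtain ⟨pN, hpN, hpNr⟩ := L.r_section hN
  obtain ⟨p', hp', hp'r⟩ := L.r_section hRN.1
  obtain ⟨sf, hsf⟩ := L.j_preenvelope (L.Qobj N) (L.Robj (L.Qobj (L.Robj N)))
    (L.Robj_mem _) ((L.r N ≫ L.j N ≫ p') ≫ L.j (L.Qobj (L.Robj N)))
  obtain ⟨b, hb⟩ := L.j_preenvelope N (L.Robj (L.Qobj N)) (L.Robj_mem _)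
    (pN ≫ L.j (L.Qobj N))
  obtain ⟨g, hg⟩ := L.j_preenvelope (L.Qobj (L.Robj N)) (L.Robj (L.Qobj N))
    (L.Robj_mem _) (L.r (L.Robj N) ≫ b)
  refine ⟨L.r N ≫ L.j N ≫ p', sf,
    by rw [Category.assoc, Category.assoc, hp', Category.comp_id], hsf, g, ?_, ?_⟩
  · -- sf ≫ g - 𝟙 : RQN → RQN
    apply L.factors_of_j_comp (L.Robj_mem _)
    have key : L.j (L.Qobj N) ≫ sf ≫ g = (L.r N ≫ pN) ≫ L.j (L.Qobj N) := by
      rw [← Category.assoc, hsf, Category.assoc, hg]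
      simp only [Category.assoc]
      rw [reassoc_of% hp', hb]
    have h1 : L.j (L.Qobj N) ≫ (sf ≫ g - 𝟙 _) =
        (L.r N ≫ pN - 𝟙 _) ≫ L.j (L.Qobj N) := by
      simp only [Preadditive.comp_sub, Preadditive.sub_comp, Category.comp_id,
        Category.id_comp, key]
    exact (hpNr.postcomp (L.j (L.Qobj N))).of_eq h1.symm
  · -- g ≫ sf - 𝟙 : RQRN → RQRN
    apply L.factors_of_j_comp (L.Robj_mem _)
    have claim1 : FactorsThruSet X (b ≫ sf - p' ≫ L.j (L.Qobj (L.Robj N))) := by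
      apply L.factors_of_j_comp (L.Robj_mem _)
      have key : L.j N ≫ (b ≫ sf - p' ≫ L.j (L.Qobj (L.Robj N))) = 0 := by
        have e1 : L.j N ≫ b ≫ sf = L.j N ≫ p' ≫ L.j (L.Qobj (L.Robj N)) := by
          rw [← Category.assoc, hb, Category.assoc, hsf]
          simp only [Category.assoc]
          rw [reassoc_of% hpN]
        rw [Preadditive.comp_sub, e1, sub_self]
      exact (FactorsThruSet.zero L.X_zero _ _).of_eq key.symm
    have key : L.j (L.Qobj (L.Robj N)) ≫ (g ≫ sf - 𝟙 _) =
        L.r (L.Robj N) ≫ (b ≫ sf - p' ≫ L.j (L.Qobj (L.Robj N))) +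
          (L.r (L.Robj N) ≫ p' - 𝟙 _) ≫ L.j (L.Qobj (L.Robj N)) := by
      have e : L.j (L.Qobj (L.Robj N)) ≫ g ≫ sf = L.r (L.Robj N) ≫ b ≫ sf := by
        rw [← Category.assoc, hg, Category.assoc]
      simp only [Preadditive.comp_sub, Preadditive.sub_comp, Category.comp_id,
        Category.id_comp, Category.assoc, e]
      abel
    exact (FactorsThruSet.add L.X_sum (claim1.precomp (L.r (L.Robj N)))
      (hp'r.postcomp (L.j (L.Qobj (L.Robj N))))).of_eq key.symm

lemma fst_mem_S {N M : 𝒜} (hM : M ∈ X) :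
    SClass L (biprod.fst : N ⊞ M ⟶ N) := by
  obtain ⟨sc, hsc⟩ := L.r_precover N (L.Qobj (N ⊞ M)) (L.Qobj_mem _)
    (L.r (N ⊞ M) ≫ biprod.fst)
  obtain ⟨sf, hsf⟩ := L.j_preenvelope (L.Qobj (N ⊞ M)) (L.Robj (L.Qobj N))
    (L.Robj_mem _) (sc ≫ L.j (L.Qobj N))
  obtain ⟨d, hd⟩ := L.r_precover (N ⊞ M) (L.Qobj N) (L.Qobj_mem N)
    (L.r N ≫ biprod.inl)
  obtain ⟨g, hg⟩ := L.j_preenvelope (L.Qobj N) (L.Robj (L.Qobj (N ⊞ M)))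
    (L.Robj_mem _) (d ≫ L.j (L.Qobj (N ⊞ M)))
  have hscd : FactorsThruSet X (sc ≫ d - 𝟙 (L.Qobj (N ⊞ M))) := by
    apply L.factors_of_comp_r (L.Qobj_mem _)
    have hfi : FactorsThruSet X ((biprod.fst ≫ biprod.inl : N ⊞ M ⟶ N ⊞ M) - 𝟙 _) :=
      ⟨M, hM, biprod.snd, -biprod.inr, by rw [Preadditive.comp_neg, ← biprod.total]; abel⟩
    have key : (sc ≫ d - 𝟙 _) ≫ L.r (N ⊞ M) =
        L.r (N ⊞ M) ≫ ((biprod.fst ≫ biprod.inl : N ⊞ M ⟶ N ⊞ M) - 𝟙 _) := by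
      rw [Preadditive.sub_comp, Preadditive.comp_sub, Category.comp_id,
        Category.id_comp, Category.assoc, hd, ← Category.assoc, hsc, Category.assoc]
    exact (hfi.precomp (L.r (N ⊞ M))).of_eq key.symm
  have hdsc : FactorsThruSet X (d ≫ sc - 𝟙 (L.Qobj N)) := by
    apply L.factors_of_comp_r (L.Qobj_mem _)
    have key : (d ≫ sc - 𝟙 _) ≫ L.r N = 0 := by
      rw [Preadditive.sub_comp, Category.assoc, hsc, ← Category.assoc, hd,
        Category.id_comp]
      simp
    exact (FactorsThruSet.zero L.X_zero _ _).of_eq key.symm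
  refine ⟨sc, sf, hsc, hsf, g, ?_, ?_⟩
  · -- sf ≫ g - 𝟙 : RQ(N⊞M) → RQ(N⊞M)
    apply L.factors_of_j_comp (L.Robj_mem _)
    have key : L.j (L.Qobj (N ⊞ M)) ≫ (sf ≫ g - 𝟙 _) =
        (sc ≫ d - 𝟙 _) ≫ L.j (L.Qobj (N ⊞ M)) := by
      have e : L.j (L.Qobj (N ⊞ M)) ≫ sf ≫ g = (sc ≫ d) ≫ L.j (L.Qobj (N ⊞ M)) := by
        rw [← Category.assoc, hsf, Category.assoc, hg, ← Category.assoc]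
      simp only [Preadditive.comp_sub, Preadditive.sub_comp, Category.comp_id,
        Category.id_comp, e]
    exact (hscd.postcomp (L.j (L.Qobj (N ⊞ M)))).of_eq key.symm
  · -- g ≫ sf - 𝟙 : RQN → RQN
    apply L.factors_of_j_comp (L.Robj_mem _)
    have key : L.j (L.Qobj N) ≫ (g ≫ sf - 𝟙 _) =
        (d ≫ sc - 𝟙 _) ≫ L.j (L.Qobj N) := by
      have e : L.j (L.Qobj N) ≫ g ≫ sf = (d ≫ sc) ≫ L.j (L.Qobj N) := by
        rw [← Category.assoc, hg, Category.assoc, hsf, ← Category.assoc]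
      simp only [Preadditive.comp_sub, Preadditive.sub_comp, Category.comp_id,
        Category.id_comp, e]
    exact (hdsc.postcomp (L.j (L.Qobj N))).of_eq key.symm

end LocalizationTriple


section Gamma

variable {C X D : Set 𝒜} {L : LocalizationTriple C X D}
variable {ℬ : Type w} [Category.{w'} ℬ] {γ : 𝒜 ⥤ ℬ}

lemma isIso_map_r (hloc : γ.IsLocalization (SClass L)) (A : 𝒜) :
    IsIso (γ.map (L.r A)) :=
  haveI := hloc
  Localization.inverts γ (SClass L) _ (L.r_mem_S A)

lemma isIso_map_j (hloc : γ.IsLocalization (SClass L)) {N : 𝒜} (hN : N ∈ C) :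
    IsIso (γ.map (L.j N)) :=
  haveI := hloc
  Localization.inverts γ (SClass L) _ (L.j_mem_S hN)

lemma map_eq_of_factors (hloc : γ.IsLocalization (SClass L)) {N N' : 𝒜} {f g : N ⟶ N'}
    (h : FactorsThruSet X (f - g)) : γ.map f = γ.map g := by
  haveI := hloc
  obtain ⟨M, hM, u, v, huv⟩ := h
  haveI : IsIso (γ.map (biprod.fst : N' ⊞ M ⟶ N')) :=
    Localization.inverts γ (SClass L) _ (L.fst_mem_S hM)
  have hα : γ.map (biprod.lift g u) = γ.map (biprod.lift g (0 : N ⟶ M)) := by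
    rw [← cancel_mono (γ.map (biprod.fst : N' ⊞ M ⟶ N')), ← γ.map_comp, ← γ.map_comp,
      biprod.lift_fst, biprod.lift_fst]
  have e1 : f = biprod.lift g u ≫ biprod.desc (𝟙 N') v := by
    rw [biprod.lift_desc, Category.comp_id, ← huv]; abel
  have e2 : g = biprod.lift g (0 : N ⟶ M) ≫ biprod.desc (𝟙 N') v := by
    rw [biprod.lift_desc, Category.comp_id, zero_comp, add_zero]
  calc γ.map f = γ.map (biprod.lift g u ≫ biprod.desc (𝟙 N') v) := by rw [← e1]
    _ = γ.map (biprod.lift g (0 : N ⟶ M) ≫ biprod.desc (𝟙 N') v) := by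
        rw [γ.map_comp, γ.map_comp, hα]
    _ = γ.map g := by rw [← e2]

/-- The key property of a morphism `φ : γ.obj A ⟶ γ.obj B`. -/
def Pc (L : LocalizationTriple C X D) (γ : 𝒜 ⥤ ℬ)
    (hloc : γ.IsLocalization (SClass L)) {A B : 𝒜} (φ : γ.obj A ⟶ γ.obj B) : Prop :=
  ∃ f' : L.Robj (L.Qobj A) ⟶ L.Robj (L.Qobj B),
    haveI := isIso_map_r hloc B
    γ.map (L.j (L.Qobj A)) ≫ γ.map f' =
      γ.map (L.r A) ≫ φ ≫ inv (γ.map (L.r B)) ≫ γ.map (L.j (L.Qobj B))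

lemma Pc_of_eq (hloc : γ.IsLocalization (SClass L)) {A B : 𝒜}
    {φ ψ : γ.obj A ⟶ γ.obj B} (e : φ = ψ) (h : Pc L γ hloc φ) : Pc L γ hloc ψ := e ▸ h

lemma Pc_comp (hloc : γ.IsLocalization (SClass L)) {A B B' : 𝒜}
    {φ : γ.obj A ⟶ γ.obj B} {ψ : γ.obj B ⟶ γ.obj B'}
    (hφ : Pc L γ hloc φ) (hψ : Pc L γ hloc ψ) : Pc L γ hloc (φ ≫ ψ) := by
  haveI := isIso_map_r hloc B
  haveI := isIso_map_r hloc B'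
  obtain ⟨f', hf'⟩ := hφ
  obtain ⟨g', hg'⟩ := hψ
  refine ⟨f' ≫ g', ?_⟩
  rw [γ.map_comp, ← Category.assoc, hf']
  simp only [Category.assoc]
  rw [hg']
  simp only [IsIso.inv_hom_id_assoc, Category.assoc]

lemma Pc_map (hloc : γ.IsLocalization (SClass L)) {A B : 𝒜} (f : A ⟶ B) :
    Pc L γ hloc (γ.map f) := by
  haveI := isIso_map_r hloc B
  obtain ⟨fc, hfc⟩ := L.r_precover B (L.Qobj A) (L.Qobj_mem A) (L.r A ≫ f)
  obtain ⟨f', hf'⟩ := L.j_preenvelope (L.Qobj A) (L.Robj (L.Qobj B)) (L.Robj_mem _)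
    (fc ≫ L.j (L.Qobj B))
  refine ⟨f', ?_⟩
  have h2 : γ.map (L.r A) ≫ γ.map f = γ.map fc ≫ γ.map (L.r B) := by
    rw [← γ.map_comp, ← hfc, γ.map_comp]
  rw [← γ.map_comp, hf', γ.map_comp, ← Category.assoc, h2]
  simp only [Category.assoc, IsIso.hom_inv_id_assoc]

lemma Pc_inv (hloc : γ.IsLocalization (SClass L)) {A B : 𝒜} (w : A ⟶ B)
    (hw : SClass L w) :
    haveI := hloc
    haveI : IsIso (γ.map w) := Localization.inverts γ (SClass L) _ hw
    Pc L γ hloc (inv (γ.map w)) := by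
  haveI := hloc
  haveI : IsIso (γ.map w) := Localization.inverts γ (SClass L) _ hw
  haveI := isIso_map_r hloc A
  haveI := isIso_map_r hloc B
  obtain ⟨sc, sf, hsc, hsf, g, hX1, hX2⟩ := hw
  haveI : IsIso (γ.map sf) := by
    refine ⟨γ.map g, ?_, ?_⟩
    · rw [← γ.map_comp, ← γ.map_id]
      exact map_eq_of_factors hloc hX1
    · rw [← γ.map_comp, ← γ.map_id]
      exact map_eq_of_factors hloc hX2
  have hS : γ.map g ≫ γ.map sf = 𝟙 _ := by
    rw [← γ.map_comp, ← γ.map_id (L.Robj (L.Qobj B))]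
    exact map_eq_of_factors hloc hX2
  have hjS : γ.map (L.j (L.Qobj A)) ≫ γ.map sf =
      γ.map sc ≫ γ.map (L.j (L.Qobj B)) := by
    rw [← γ.map_comp, hsf, γ.map_comp]
  have hcb : γ.map sc ≫ γ.map (L.r B) = γ.map (L.r A) ≫ γ.map w := by
    rw [← γ.map_comp, hsc, γ.map_comp]
  have hc : inv (γ.map (L.r A)) ≫ γ.map sc = γ.map w ≫ inv (γ.map (L.r B)) := by
    rw [IsIso.inv_comp_eq, ← Category.assoc, IsIso.eq_comp_inv]
    exact hcb
  refine ⟨g, ?_⟩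
  rw [← cancel_mono (γ.map sf)]
  simp only [Category.assoc, hS, Category.comp_id, hjS]
  rw [reassoc_of% hc]
  simp only [IsIso.inv_hom_id_assoc, IsIso.hom_inv_id_assoc]

end Gamma


section Crux

variable {C X D : Set 𝒜} (L : LocalizationTriple C X D)

/-- Every morphism between objects in the image of the constructed localization
functor satisfies `Pc`. -/
lemma crux_Q (A B : 𝒜) (φ : (SClass L).Q.obj A ⟶ (SClass L).Q.obj B) :
    Pc L (SClass L).Q (inferInstance) φ := by
  let P₀ : MorphismProperty (SClass L).Localization := fun Y₁ Y₂ f =>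
    ∀ (A₀ B₀ : 𝒜) (hA : (SClass L).Q.obj A₀ = Y₁) (hB : (SClass L).Q.obj B₀ = Y₂),
      Pc L (SClass L).Q inferInstance (eqToHom hA ≫ f ≫ eqToHom hB.symm)
  haveI : P₀.IsStableUnderComposition := by
    constructor
    intro Y₁ Y₂ Y₃ f g hf hg A₀ C₀ hA hC
    have hB : (SClass L).Q.obj ((Localization.Construction.objEquiv (SClass L)).symm Y₂) = Y₂ :=
      (Localization.Construction.objEquiv (SClass L)).apply_symm_apply Y₂
    have h := Pc_comp inferInstance (hf A₀ _ hA hB) (hg _ C₀ hB hC)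
    refine Pc_of_eq inferInstance ?_ h
    simp
  have hP₁ : ∀ ⦃A₀ B₀ : 𝒜⦄ (f : A₀ ⟶ B₀), P₀ ((SClass L).Q.map f) := by
    intro A₀ B₀ f A₁ B₁ hA hB
    obtain rfl : A₁ = A₀ := (Localization.Construction.objEquiv (SClass L)).injective hA
    obtain rfl : B₁ = B₀ := (Localization.Construction.objEquiv (SClass L)).injective hB
    exact Pc_of_eq inferInstance (by simp) (Pc_map inferInstance f)
  have hP₂ : ∀ ⦃A₀ B₀ : 𝒜⦄ (w : A₀ ⟶ B₀) (hw : SClass L w),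
      P₀ (Localization.Construction.wInv w hw) := by
    intro A₀ B₀ w hw A₁ B₁ hA hB
    obtain rfl : A₁ = B₀ := (Localization.Construction.objEquiv (SClass L)).injective hA
    obtain rfl : B₁ = A₀ := (Localization.Construction.objEquiv (SClass L)).injective hB
    haveI : IsIso ((SClass L).Q.map w) := Localization.inverts (SClass L).Q (SClass L) _ hw
    have hwinv : Localization.Construction.wInv w hw = inv ((SClass L).Q.map w) :=
      IsIso.eq_inv_of_hom_inv_id (Localization.Construction.wIso w hw).hom_inv_id
    refine Pc_of_eq inferInstance (by simp [hwinv]) (Pc_inv inferInstance w hw)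
  have htop := Localization.Construction.morphismProperty_eq_top P₀ hP₁ hP₂
  have hφ : P₀ φ := by rw [htop]; trivial
  exact Pc_of_eq inferInstance (by simp) (hφ A B rfl rfl)

end Crux


theorem morphism_decomposition_in_localization {C X D : Set 𝒜}
    (L : LocalizationTriple C X D)
    {ℬ : Type w} [Category.{w'} ℬ] (γ : 𝒜 ⥤ ℬ)
    (hγ : γ.IsLocalization (SClass L))
    {A B : 𝒜} (φ : γ.obj A ⟶ γ.obj B) :
    ∃ (f' : L.Robj (L.Qobj A) ⟶ L.Robj (L.Qobj B))
      (ρ : γ.obj A ⟶ γ.obj (L.Qobj A))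
      (σ : γ.obj (L.Robj (L.Qobj B)) ⟶ γ.obj (L.Qobj B)),
      γ.map (L.r A) ≫ ρ = 𝟙 _ ∧ ρ ≫ γ.map (L.r A) = 𝟙 _ ∧
      γ.map (L.j (L.Qobj B)) ≫ σ = 𝟙 _ ∧ σ ≫ γ.map (L.j (L.Qobj B)) = 𝟙 _ ∧
      φ = ρ ≫ γ.map (L.j (L.Qobj A)) ≫ γ.map f' ≫ σ ≫ γ.map (L.r B) := by
  haveI := hγ
  haveI : IsIso (γ.map (L.r A)) := isIso_map_r hγ A
  haveI : IsIso (γ.map (L.r B)) := isIso_map_r hγ B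
  haveI : IsIso (γ.map (L.j (L.Qobj B))) := isIso_map_j hγ (L.Qobj_mem B)
  haveI : IsIso ((SClass L).Q.map (L.r B)) := isIso_map_r inferInstance B
  let E := Localization.uniq (SClass L).Q γ (SClass L)
  let F := E.functor
  let e : (SClass L).Q ⋙ F ≅ γ := Localization.compUniqFunctor (SClass L).Q γ (SClass L)
  have hconj : ∀ {P P' : 𝒜} (x : P ⟶ P'),
      F.map ((SClass L).Q.map x) = e.hom.app P ≫ γ.map x ≫ e.inv.app P' := by
    intro P P' x
    have h1 := e.hom.naturality x
    rw [← Category.assoc, ← h1]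
    simp
  let φ₀ : (SClass L).Q.obj A ⟶ (SClass L).Q.obj B :=
    F.preimage (e.hom.app A ≫ φ ≫ e.inv.app B)
  obtain ⟨f', hf'₀⟩ := crux_Q L A B φ₀
  have h2 : F.map ((SClass L).Q.map (L.j (L.Qobj A))) ≫ F.map ((SClass L).Q.map f') =
      F.map ((SClass L).Q.map (L.r A)) ≫ F.map φ₀ ≫
        F.map (inv ((SClass L).Q.map (L.r B))) ≫
        F.map ((SClass L).Q.map (L.j (L.Qobj B))) := by
    simpa only [Functor.map_comp, Category.assoc] using congrArg F.map hf'₀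
  have hFinv : F.map (inv ((SClass L).Q.map (L.r B))) =
      e.hom.app B ≫ inv (γ.map (L.r B)) ≫ e.inv.app (L.Qobj B) := by
    have hid : F.map ((SClass L).Q.map (L.r B)) ≫
        (e.hom.app B ≫ inv (γ.map (L.r B)) ≫ e.inv.app (L.Qobj B)) = 𝟙 _ := by
      rw [hconj (L.r B)]
      simp only [Category.assoc, Iso.inv_hom_id_app_assoc, IsIso.hom_inv_id_assoc,
        Iso.hom_inv_id_app]
      rfl
    rw [Functor.map_inv]
    exact (IsIso.eq_inv_of_hom_inv_id hid).symm
  rw [Functor.map_preimage, hFinv] at h2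
  simp only [hconj] at h2
  simp only [Category.assoc, Iso.inv_hom_id_app_assoc] at h2
  haveI : IsIso (e.hom.app (L.Qobj A)) := inferInstance
  haveI : IsIso (e.inv.app (L.Robj (L.Qobj B))) := inferInstance
  have h3 : γ.map (L.j (L.Qobj A)) ≫ γ.map f' =
      γ.map (L.r A) ≫ φ ≫ inv (γ.map (L.r B)) ≫ γ.map (L.j (L.Qobj B)) := by
    rw [← cancel_epi (e.hom.app (L.Qobj A)), ← cancel_mono (e.inv.app (L.Robj (L.Qobj B)))]
    simpa only [Category.assoc] using h2
  refine ⟨f', inv (γ.map (L.r A)), inv (γ.map (L.j (L.Qobj B))),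
    IsIso.hom_inv_id _, IsIso.inv_hom_id _, IsIso.hom_inv_id _, IsIso.inv_hom_id _, ?_⟩
  rw [eq_comm, IsIso.inv_comp_eq, reassoc_of% h3]
  simp only [IsIso.inv_hom_id_assoc, IsIso.hom_inv_id_assoc, IsIso.inv_hom_id,
    Category.comp_id]

end LiHomotopy
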